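/- arXiv:1808.10034 — 2 statements merged into one kernel-verified Lean document; each statement's English description precedes it below -/
import Mathlib

section
/- The category Grphs of multigraphs with graph morphisms is balanced: every morphism that is both a monomorphism and an epimorphism is an isomorphism (i.e., has a two-sided inverse graph morphism). -/
/-- A multigraph: a vertex type, an edge type, and an incidence function
assigning to each edge an unordered pair of vertices. -/
structure Multigraph : Type 1 where
  V : Type
  E : Type
  ψ : E → Sym2 V

namespace Multigraph

/-- The part set of a multigraph: vertices together with edges. -/
abbrev Part (G : Multigraph) : Type := G.V ⊕ G.E

/-- The incidence function extended to parts: a vertex `v` is incident to `{v,v}`. -/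
def incid (G : Multigraph) : G.Part → Sym2 G.V
  | Sum.inl v => s(v, v)
  | Sum.inr e => G.ψ e

/-- A graph morphism: a function on part sets mapping vertices to vertices and
preserving incidence.  (The vertex map is recorded separately, but it is uniquely
determined by the part map.) -/
@[ext]
structure Hom (G H : Multigraph) where
  partMap : G.Part → H.Part
  vertMap : G.V → H.V
  partMap_vert : ∀ v : G.V, partMap (Sum.inl v) = Sum.inl (vertMap v)
  incid_partMap : ∀ p : G.Part, H.incid (partMap p) = (G.incid p).map vertMap

/-- The identity graph morphism. -/
def Hom.id (G : Multigraph) : Hom G G where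
  partMap := _root_.id
  vertMap := _root_.id
  partMap_vert := fun _ => rfl
  incid_partMap := fun p => by simp

/-- Composition of graph morphisms. -/
def Hom.comp {G H K : Multigraph} (g : Hom H K) (f : Hom G H) : Hom G K where
  partMap := g.partMap ∘ f.partMap
  vertMap := g.vertMap ∘ f.vertMap
  partMap_vert := fun v => by simp [f.partMap_vert, g.partMap_vert]
  incid_partMap := fun p => by
    simp [Function.comp, g.incid_partMap, f.incid_partMap, Sym2.map_map]

/-- A strict graph morphism: a graph morphism that moreover maps edges to edges. -/
@[ext]
structure StrictHom (G H : Multigraph) extends Hom G H where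
  edgeMap : G.E → H.E
  partMap_edge : ∀ e : G.E, partMap (Sum.inr e) = Sum.inr (edgeMap e)

/-- The identity strict graph morphism. -/
def StrictHom.id (G : Multigraph) : StrictHom G G where
  toHom := Hom.id G
  edgeMap := _root_.id
  partMap_edge := fun _ => rfl

/-- Composition of strict graph morphisms. -/
def StrictHom.comp {G H K : Multigraph} (g : StrictHom H K) (f : StrictHom G H) :
    StrictHom G K where
  toHom := g.toHom.comp f.toHom
  edgeMap := g.edgeMap ∘ f.edgeMap
  partMap_edge := fun e => by
    simp [Hom.comp, f.partMap_edge, g.partMap_edge]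

end Multigraph

/-!
A monomorphism is injective on parts: test it against the one-vertex graph (to separate
vertices) and against one-edge graphs (to separate parts with the same ends). An epimorphism
is surjective on parts: its vertex image is detected by two maps into the complete graph on
`Prop`, and an edge `ε` outside its image is detected by the two embeddings of `B` into `B` with
a parallel copy of `ε` added, which differ only at `ε`. Once the part map is bijective, so
is the vertex map (a part hitting the vertex `w` has all its ends sent to `w`), and the two
inverse maps form the inverse graph morphism.
-/

namespace Multigraph

open Function

variable {A B : Multigraph}

theorem Hom.ext_partMap {f g : Hom A B} (h : f.partMap = g.partMap) : f = g := by
  refine Hom.ext h (funext fun v => ?_)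
  have hv := congrFun h (Sum.inl v)
  rwa [f.partMap_vert, g.partMap_vert, Sum.inl.injEq] at hv

theorem Hom.exists_mem_incid_vertMap_eq {f : Hom A B} {w : B.V} {p : A.Part}
    (hw : w ∈ B.incid (f.partMap p)) : ∃ v ∈ A.incid p, f.vertMap v = w := by
  rwa [f.incid_partMap, Sym2.mem_map] at hw

def IsMono (f : Hom A B) : Prop :=
  ∀ (C : Multigraph) (g h : Hom C A), f.comp g = f.comp h → g = h

def IsEpi (f : Hom A B) : Prop :=
  ∀ (C : Multigraph) (g h : Hom B C), g.comp f = h.comp f → g = h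

section Mono

def unitGraph : Multigraph := ⟨Unit, Empty, Empty.elim⟩

def Hom.ofVert (a : A.V) : Hom unitGraph A where
  partMap _ := Sum.inl a
  vertMap _ := a
  partMap_vert _ := rfl
  incid_partMap
    | Sum.inl _ => rfl
    | Sum.inr e => e.elim

def edgeGraph (V : Type) (s : Sym2 V) : Multigraph := ⟨V, Unit, fun _ => s⟩

/-- The edge goes to `p`, which may be a vertex. -/
def Hom.ofPart {s : Sym2 A.V} (p : A.Part) (hp : A.incid p = s) : Hom (edgeGraph A.V s) A where
  partMap := Sum.elim Sum.inl fun _ => p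
  vertMap := _root_.id
  partMap_vert _ := rfl
  incid_partMap
    | Sum.inl _ => (congrFun Sym2.map_id _).symm
    | Sum.inr _ => hp.trans (congrFun Sym2.map_id _).symm

theorem vertMap_injective_of_isMono {f : Hom A B} (hf : IsMono f) : Injective f.vertMap := by
  intro v₁ v₂ h
  have hcomp : f.comp (Hom.ofVert v₁) = f.comp (Hom.ofVert v₂) :=
    Hom.ext_partMap <| funext fun _ => by
      change f.partMap (Sum.inl v₁) = f.partMap (Sum.inl v₂)
      rw [f.partMap_vert, f.partMap_vert, h]
  exact congrArg (fun g => g.vertMap ()) (hf _ _ _ hcomp)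

theorem partMap_injective_of_isMono {f : Hom A B} (hf : IsMono f) : Injective f.partMap := by
  intro p₁ p₂ h
  have hincid : A.incid p₂ = A.incid p₁ := by
    apply Sym2.map.injective (vertMap_injective_of_isMono hf)
    rw [← f.incid_partMap, ← f.incid_partMap, h]
  have hcomp : f.comp (Hom.ofPart p₁ rfl) = f.comp (Hom.ofPart p₂ hincid) :=
    Hom.ext_partMap <| funext fun q => by
      rcases q with _ | _
      · rfl
      · exact h
  exact congrArg (fun g => g.partMap (Sum.inr ())) (hf _ _ _ hcomp)

end Mono

section Epi

def complete (X : Type) : Multigraph := ⟨X, Sym2 X, id⟩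

def Hom.toComplete {X : Type} (φ : B.V → X) : Hom B (complete X) where
  partMap := Sum.elim (fun v => Sum.inl (φ v)) fun e => Sum.inr ((B.ψ e).map φ)
  vertMap := φ
  partMap_vert _ := rfl
  incid_partMap
    | Sum.inl _ => rfl
    | Sum.inr _ => rfl

theorem Hom.toComplete_partMap_congr {X : Type} {φ χ : B.V → X} {q : B.Part}
    (h : ∀ v ∈ B.incid q, φ v = χ v) :
    (Hom.toComplete φ).partMap q = (Hom.toComplete χ).partMap q := by
  rcases q with v | e
  · exact congrArg Sum.inl (h v (Sym2.mem_mk_left v v))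
  · exact congrArg Sum.inr (Sym2.map_congr h)

theorem vertMap_surjective_of_isEpi {f : Hom A B} (hf : IsEpi f) : Surjective f.vertMap := by
  have hcomp : (Hom.toComplete fun _ => True).comp f =
      (Hom.toComplete fun w => w ∈ Set.range f.vertMap).comp f :=
    Hom.ext_partMap <| funext fun p => Hom.toComplete_partMap_congr fun w hw => by
      obtain ⟨v, -, hv⟩ := Hom.exists_mem_incid_vertMap_eq hw
      exact (eq_true ⟨v, hv⟩).symm
  intro w
  exact of_eq_true (congrArg (fun g => g.vertMap w) (hf _ _ _ hcomp)).symm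

def Hom.ofEdgeMap {V E E' : Type} {ψ : E → Sym2 V} {ψ' : E' → Sym2 V} (σ : E → E')
    (hσ : ∀ e, ψ' (σ e) = ψ e) : Hom ⟨V, E, ψ⟩ ⟨V, E', ψ'⟩ where
  partMap := Sum.map _root_.id σ
  vertMap := _root_.id
  partMap_vert _ := rfl
  incid_partMap
    | Sum.inl _ => (congrFun Sym2.map_id _).symm
    | Sum.inr e => (hσ e).trans (congrFun Sym2.map_id _).symm

/-- `B` with an extra edge `none` parallel to `ε`. -/
def addParallelEdge (B : Multigraph) (ε : B.E) : Multigraph :=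
  ⟨B.V, Option B.E, fun e => B.ψ (e.getD ε)⟩

def Hom.inclParallel (ε : B.E) : Hom B (B.addParallelEdge ε) :=
  Hom.ofEdgeMap some fun _ => rfl

open Classical in
noncomputable def Hom.inclParallelSwap (ε : B.E) : Hom B (B.addParallelEdge ε) :=
  Hom.ofEdgeMap (fun e => if e = ε then none else some e) fun e => by
    by_cases h : e = ε <;> simp [h]

theorem exists_partMap_eq_edge_of_isEpi {f : Hom A B} (hf : IsEpi f) (ε : B.E) :
    ∃ p, f.partMap p = Sum.inr ε := by
  by_contra! hε
  have hcomp : (Hom.inclParallel ε).comp f = (Hom.inclParallelSwap ε).comp f := by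
    refine Hom.ext_partMap <| funext fun p => ?_
    change (Hom.inclParallel ε).partMap (f.partMap p) =
      (Hom.inclParallelSwap ε).partMap (f.partMap p)
    rcases hq : f.partMap p with w | e
    · rfl
    · have he : e ≠ ε := by rintro rfl; exact hε p hq
      exact congrArg Sum.inr (if_neg he).symm
  have h := congrArg (fun g => g.partMap (Sum.inr ε)) (hf _ _ _ hcomp)
  simp only [Hom.inclParallel, Hom.inclParallelSwap, Hom.ofEdgeMap, Sum.map_inr, if_pos] at h
  cases h

theorem partMap_surjective_of_isEpi {f : Hom A B} (hf : IsEpi f) : Surjective f.partMap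
  | Sum.inl w =>
    let ⟨v, hv⟩ := vertMap_surjective_of_isEpi hf w
    ⟨Sum.inl v, by rw [f.partMap_vert, hv]⟩
  | Sum.inr ε => exists_partMap_eq_edge_of_isEpi hf ε

end Epi

theorem Hom.vertMap_bijective {f : Hom A B} (hf : Bijective f.partMap) :
    Bijective f.vertMap := by
  refine ⟨fun v₁ v₂ h => Sum.inl_injective <| hf.1 ?_, fun w => ?_⟩
  · rw [f.partMap_vert, f.partMap_vert, h]
  · obtain ⟨p, hp⟩ := hf.2 (Sum.inl w)
    have hw : w ∈ B.incid (f.partMap p) := by rw [hp]; exact Sym2.mem_mk_left w w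
    obtain ⟨v, -, hv⟩ := Hom.exists_mem_incid_vertMap_eq hw
    exact ⟨v, hv⟩

theorem Hom.exists_inverse_of_bijective {f : Hom A B} (hf : Bijective f.partMap) :
    ∃ g : Hom B A, g.comp f = Hom.id A ∧ f.comp g = Hom.id B := by
  let eP := Equiv.ofBijective f.partMap hf
  let eV := Equiv.ofBijective f.vertMap (Hom.vertMap_bijective hf)
  refine ⟨⟨eP.symm, eV.symm, fun w => eP.injective ?_, fun q => ?_⟩,
    Hom.ext_partMap (funext eP.symm_apply_apply), Hom.ext_partMap (funext eP.apply_symm_apply)⟩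
  · change eP (eP.symm _) = f.partMap _
    rw [eP.apply_symm_apply, f.partMap_vert]
    exact congrArg Sum.inl (eV.apply_symm_apply w).symm
  · calc A.incid (eP.symm q) = ((A.incid (eP.symm q)).map eV).map eV.symm := by
          rw [Sym2.map_map, eV.symm_comp_self, Sym2.map_id]; rfl
      _ = (B.incid (f.partMap (eP.symm q))).map eV.symm := by rw [f.incid_partMap]; rfl
      _ = (B.incid q).map eV.symm :=
          congrArg (fun x => (B.incid x).map eV.symm) (eP.apply_symm_apply q)

end Multigraph

open Multigraph in
/-- The category **Grphs** is balanced: a morphism that is both a monomorphism and an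
epimorphism is an isomorphism, i.e. has a two-sided inverse graph morphism. -/
theorem grphs_balanced (A B : Multigraph) (f : Hom A B)
    (hmono : ∀ (C : Multigraph) (g h : Hom C A), f.comp g = f.comp h → g = h)
    (hepi : ∀ (C : Multigraph) (g h : Hom B C), g.comp f = h.comp f → g = h) :
    ∃ g : Hom B A, g.comp f = Hom.id A ∧ f.comp g = Hom.id B :=
  Hom.exists_inverse_of_bijective
    ⟨partMap_injective_of_isMono hmono, partMap_surjective_of_isEpi hepi⟩
end

section
/- The category StGrphs of multigraphs with strict graph morphisms is balanced: every morphism that is both a monomorphism and an epimorphism is an isomorphism (i.e., has a two-sided inverse strict graph morphism). -/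
/-! Monomorphisms are injective on vertices and on edges: test them against the one-vertex graph
and against one-edge graphs. Epimorphisms are surjective on both: strict morphisms into
`Multigraph.classifier` are pairs of predicates (on vertices, on edges), and an epimorphism `f`
cannot distinguish "lies in the image of `f`" from "true". A strict morphism bijective on
vertices and on edges is invertible. -/

namespace Multigraph

def point : Multigraph := ⟨Unit, Empty, Empty.elim⟩

def singleEdge (V : Type) (s : Sym2 V) : Multigraph := ⟨V, Unit, fun _ => s⟩

/-- Strict morphisms `G → classifier` correspond to pairs of predicates on `G.V` and `G.E`:
the second component of the image of an edge is forced by incidence. -/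
def classifier : Multigraph := ⟨Prop, Prop × Sym2 Prop, Prod.snd⟩

namespace StrictHom

variable {A B G H : Multigraph}

def IsMono (f : StrictHom A B) : Prop :=
  ∀ (C : Multigraph) (g h : StrictHom C A), f.comp g = f.comp h → g = h

def IsEpi (f : StrictHom A B) : Prop :=
  ∀ (C : Multigraph) (g h : StrictHom B C), g.comp f = h.comp f → g = h

theorem partMap_eq_sumMap (f : StrictHom G H) : f.partMap = Sum.map f.vertMap f.edgeMap := by
  funext p
  rcases p with v | e
  · exact f.partMap_vert v
  · exact f.partMap_edge e

theorem ext_maps {f g : StrictHom G H} (hv : f.vertMap = g.vertMap) (he : f.edgeMap = g.edgeMap) :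
    f = g :=
  StrictHom.ext (by rw [partMap_eq_sumMap, partMap_eq_sumMap, hv, he]) hv he

theorem ψ_edgeMap (f : StrictHom G H) (e : G.E) : H.ψ (f.edgeMap e) = (G.ψ e).map f.vertMap := by
  simpa only [f.partMap_edge, incid] using f.incid_partMap (Sum.inr e)

@[simp]
theorem comp_vertMap {K : Multigraph} (g : StrictHom H K) (f : StrictHom G H) :
    (g.comp f).vertMap = g.vertMap ∘ f.vertMap := rfl

@[simp]
theorem comp_edgeMap {K : Multigraph} (g : StrictHom H K) (f : StrictHom G H) :
    (g.comp f).edgeMap = g.edgeMap ∘ f.edgeMap := rfl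

@[simp]
theorem id_vertMap : (StrictHom.id G).vertMap = _root_.id := rfl

@[simp]
theorem id_edgeMap : (StrictHom.id G).edgeMap = _root_.id := rfl

def ofMaps (φ : G.V → H.V) (χ : G.E → H.E) (hχ : ∀ e, H.ψ (χ e) = (G.ψ e).map φ) :
    StrictHom G H where
  partMap := Sum.map φ χ
  vertMap := φ
  partMap_vert _ := rfl
  incid_partMap := by
    rintro (v | e)
    · simp [incid]
    · exact hχ e
  edgeMap := χ
  partMap_edge _ := rfl

@[simp]
theorem ofMaps_vertMap (φ : G.V → H.V) (χ : G.E → H.E) (hχ : ∀ e, H.ψ (χ e) = (G.ψ e).map φ) :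
    (ofMaps φ χ hχ).vertMap = φ := rfl

@[simp]
theorem ofMaps_edgeMap (φ : G.V → H.V) (χ : G.E → H.E) (hχ : ∀ e, H.ψ (χ e) = (G.ψ e).map φ) :
    (ofMaps φ χ hχ).edgeMap = χ := rfl

def ofVertex (v : G.V) : StrictHom point G :=
  ofMaps (fun _ => v) Empty.elim (fun e => e.elim)

def ofEdge {s : Sym2 G.V} (e : G.E) (he : G.ψ e = s) : StrictHom (singleEdge G.V s) G :=
  ofMaps _root_.id (fun _ => e) (fun _ => by simp [singleEdge, he])

def classify (P : G.V → Prop) (Q : G.E → Prop) : StrictHom G classifier :=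
  ofMaps P (fun e => (Q e, (G.ψ e).map P)) (fun _ => rfl)

theorem classify_comp (P : B.V → Prop) (Q : B.E → Prop) (f : StrictHom A B) :
    (classify P Q).comp f = classify (P ∘ f.vertMap) (Q ∘ f.edgeMap) :=
  ext_maps rfl <| funext fun e => Prod.ext rfl <| by
    change (B.ψ (f.edgeMap e)).map P = (A.ψ e).map (P ∘ f.vertMap)
    rw [ψ_edgeMap, Sym2.map_map]

theorem vertMap_injective_of_isMono {f : StrictHom A B} (hf : f.IsMono) :
    Function.Injective f.vertMap := fun a b hab =>
  congrArg (fun g => g.vertMap ()) <|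
    hf point (ofVertex a) (ofVertex b) (ext_maps (funext fun _ => hab) (funext nofun))

theorem edgeMap_injective_of_isMono {f : StrictHom A B} (hf : f.IsMono) :
    Function.Injective f.edgeMap := by
  intro e₁ e₂ hfe
  have hψ : A.ψ e₂ = A.ψ e₁ :=
    Sym2.map.injective (vertMap_injective_of_isMono hf) (by rw [← ψ_edgeMap, ← ψ_edgeMap, hfe])
  exact congrArg (fun g => g.edgeMap ()) <|
    hf _ (ofEdge e₁ rfl) (ofEdge e₂ hψ) (ext_maps rfl (funext fun _ => hfe))

theorem surjective_of_isEpi {f : StrictHom A B} (hf : f.IsEpi) :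
    Function.Surjective f.vertMap ∧ Function.Surjective f.edgeMap := by
  have h := hf classifier (classify (· ∈ Set.range f.vertMap) (· ∈ Set.range f.edgeMap))
    (classify (fun _ => True) (fun _ => True)) (by
      rw [classify_comp, classify_comp]
      congr 1 <;> funext x <;> simp)
  refine ⟨fun b => ?_, fun e => ?_⟩
  · exact of_eq_true (congrArg (fun g => g.vertMap b) h)
  · exact of_eq_true (congrArg (fun g => (g.edgeMap e).1) h)

theorem exists_inverse_of_bijective {f : StrictHom A B} (hv : Function.Bijective f.vertMap)
    (he : Function.Bijective f.edgeMap) :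
    ∃ g : StrictHom B A, g.comp f = StrictHom.id A ∧ f.comp g = StrictHom.id B := by
  let φ := Equiv.ofBijective _ hv
  let χ := Equiv.ofBijective _ he
  have hχ : ∀ e, A.ψ (χ.symm e) = (B.ψ e).map φ.symm := fun e => by
    conv_rhs => rw [← χ.apply_symm_apply e]
    rw [Equiv.ofBijective_apply, ψ_edgeMap, Sym2.map_map, show φ.symm ∘ f.vertMap = _root_.id from
      funext φ.symm_apply_apply, Sym2.map_id]
    rfl
  refine ⟨ofMaps φ.symm χ.symm hχ, ext_maps ?_ ?_, ext_maps ?_ ?_⟩ <;> funext x <;>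
    simp [φ, χ, Equiv.ofBijective_apply_symm_apply, Equiv.ofBijective_symm_apply_apply]

end StrictHom

end Multigraph

open Multigraph in
/-- The category **StGrphs** is balanced: a morphism that is both a monomorphism and an
epimorphism is an isomorphism, i.e. has a two-sided inverse strict graph morphism. -/
theorem stgrphs_balanced (A B : Multigraph) (f : StrictHom A B)
    (hmono : ∀ (C : Multigraph) (g h : StrictHom C A), f.comp g = f.comp h → g = h)
    (hepi : ∀ (C : Multigraph) (g h : StrictHom B C), g.comp f = h.comp f → g = h) :
    ∃ g : StrictHom B A, g.comp f = StrictHom.id A ∧ f.comp g = StrictHom.id B := by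
  obtain ⟨hv_surj, he_surj⟩ := StrictHom.surjective_of_isEpi hepi
  exact StrictHom.exists_inverse_of_bijective
    ⟨StrictHom.vertMap_injective_of_isMono hmono, hv_surj⟩
    ⟨StrictHom.edgeMap_injective_of_isMono hmono, he_surj⟩
end
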